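/- arXiv:1803.07696 — 2 statements merged into one kernel-verified Lean document; each statement's English description precedes it below -/
import Mathlib

section
/- (Lemma 2, rank nondecreasing.) Let 1 ≤ t ≤ t+l−1 < T. If the matrix A_{t+l} ∈ ℝ^{n×n} is invertible (det A_{t+l} ≠ 0), then rank H(t,l) ≤ rank H(t,l+1). -/
open Matrix

noncomputable section

variable {n m r : ℕ}

/-- Block upper bidiagonal matrix `F_x(t,l)` (0-based block indices): diagonal blocks are
`I_n`, and block `(i, i+1)` is `-(A (t+i))ᵀ`. -/
def Fx (A : ℕ → Matrix (Fin n) (Fin n) ℝ) (t l : ℕ) :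
    Matrix (Fin l × Fin n) (Fin l × Fin n) ℝ :=
  fun ip jq =>
    if ip.1 = jq.1 then (if ip.2 = jq.2 then (1 : ℝ) else 0)
    else if (jq.1 : ℕ) = (ip.1 : ℕ) + 1 then -((A (t + (ip.1 : ℕ)))ᵀ ip.2 jq.2)
    else 0

/-- Block diagonal matrix `F_u(t,l)` with diagonal blocks `(B (t+i))ᵀ`. -/
def Fu (B : ℕ → Matrix (Fin n) (Fin m) ℝ) (t l : ℕ) :
    Matrix (Fin l × Fin m) (Fin l × Fin n) ℝ :=
  fun ip jq => if ip.1 = jq.1 then (B (t + (ip.1 : ℕ)))ᵀ ip.2 jq.2 else 0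

/-- Vertical stack `Φ_x(t,l)` of the blocks `(G (t+i))ᵀ`. -/
def Phix (G : ℕ → Matrix (Fin r) (Fin n) ℝ) (t l : ℕ) :
    Matrix (Fin l × Fin n) (Fin r) ℝ :=
  fun ip q => (G (t + (ip.1 : ℕ)))ᵀ ip.2 q

/-- Vertical stack `Φ_u(t,l)` of the blocks `(D (t+i))ᵀ`. -/
def Phiu (D : ℕ → Matrix (Fin r) (Fin m) ℝ) (t l : ℕ) :
    Matrix (Fin l × Fin m) (Fin r) ℝ :=
  fun ip q => (D (t + (ip.1 : ℕ)))ᵀ ip.2 q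

/-- `V(t,l)`: all `n×n` blocks zero except the last one, which is `(A (t+l-1))ᵀ`. -/
def Vm (A : ℕ → Matrix (Fin n) (Fin n) ℝ) (t l : ℕ) :
    Matrix (Fin l × Fin n) (Fin n) ℝ :=
  fun ip q => if (ip.1 : ℕ) = l - 1 then (A (t + l - 1))ᵀ ip.2 q else 0

/-- `H₁(t,l) = F_u(t,l) · F_x(t,l)⁻¹ · Φ_x(t,l) + Φ_u(t,l)`. -/
def H1m (A : ℕ → Matrix (Fin n) (Fin n) ℝ) (B : ℕ → Matrix (Fin n) (Fin m) ℝ)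
    (G : ℕ → Matrix (Fin r) (Fin n) ℝ) (D : ℕ → Matrix (Fin r) (Fin m) ℝ) (t l : ℕ) :
    Matrix (Fin l × Fin m) (Fin r) ℝ :=
  Fu B t l * (Fx A t l)⁻¹ * Phix G t l + Phiu D t l

/-- `H₂(t,l) = F_u(t,l) · F_x(t,l)⁻¹ · V(t,l)`. -/
def H2m (A : ℕ → Matrix (Fin n) (Fin n) ℝ) (B : ℕ → Matrix (Fin n) (Fin m) ℝ) (t l : ℕ) :
    Matrix (Fin l × Fin m) (Fin n) ℝ :=
  Fu B t l * (Fx A t l)⁻¹ * Vm A t l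

/-- The recovery matrix `H(t,l) = [H₁(t,l)  H₂(t,l)]`. -/
def Hm (A : ℕ → Matrix (Fin n) (Fin n) ℝ) (B : ℕ → Matrix (Fin n) (Fin m) ℝ)
    (G : ℕ → Matrix (Fin r) (Fin n) ℝ) (D : ℕ → Matrix (Fin r) (Fin m) ℝ) (t l : ℕ) :
    Matrix (Fin l × Fin m) (Fin r ⊕ Fin n) ℝ :=
  fromCols (H1m A B G D t l) (H2m A B t l)

/-- Stack the vectors `lam t, lam (t+1), …, lam (t+l-1)` into a vector in `ℝ^{nl}`. -/
def stackVec (lam : ℕ → Fin n → ℝ) (t l : ℕ) : Fin l × Fin n → ℝ :=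
  fun ip => lam (t + (ip.1 : ℕ)) ip.2

/-- Full-horizon KKT conditions for the weight vector `ω` with costates `lam 1, …, lam T`. -/
def KKT (A : ℕ → Matrix (Fin n) (Fin n) ℝ) (B : ℕ → Matrix (Fin n) (Fin m) ℝ)
    (G : ℕ → Matrix (Fin r) (Fin n) ℝ) (D : ℕ → Matrix (Fin r) (Fin m) ℝ) (T : ℕ)
    (ω : Fin r → ℝ) (lam : ℕ → Fin n → ℝ) : Prop :=
  -(Fx A 1 T *ᵥ stackVec lam 1 T) + Phix G 1 T *ᵥ ω = 0 ∧
    Fu B 1 T *ᵥ stackVec lam 1 T + Phiu D 1 T *ᵥ ω = 0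

/-- The natural identification of `ℝ^{(l+1)·ι}`-indices with `ℝ^{l·ι} × ℝ^{ι}`-indices. -/
def splitIdx (l : ℕ) (ι : Type*) : Fin (l + 1) × ι → (Fin l × ι) ⊕ ι :=
  fun ip => if h : (ip.1 : ℕ) < l then Sum.inl (⟨ip.1, h⟩, ip.2) else Sum.inr ip.2

/-! Splitting off the last block, `F_x(t,l+1)` is block upper triangular with diagonal blocks
`F_x(t,l)` and `I`, so its inverse is again block upper triangular, with blocks `F_x(t,l)⁻¹`,
`F_x(t,l)⁻¹ V(t,l)` and `I`. Feeding this into the definition shows that the first `l` block rows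
of `H(t,l+1)` are `H(t,l) · [[I, 0], [G_{t+l}ᵀ, A_{t+l}ᵀ]]`. The right factor is invertible
when `A_{t+l}` is, so `H(t,l)` has the rank of a row submatrix of `H(t,l+1)`. -/

lemma Matrix.submatrix_id_fromCols {α m₀ m n₁ n₂ : Type*} (A₁ : Matrix m n₁ α)
    (A₂ : Matrix m n₂ α) (f : m₀ → m) :
    (fromCols A₁ A₂).submatrix f id = fromCols (A₁.submatrix f id) (A₂.submatrix f id) := by
  ext i (j | j) <;> rfl

def finSuccProdEquiv (l : ℕ) (ι : Type*) : Fin (l + 1) × ι ≃ (Fin l × ι) ⊕ ι where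
  toFun := splitIdx l ι
  invFun := Sum.elim (fun ip => (ip.1.castSucc, ip.2)) (fun p => (Fin.last l, p))
  left_inv := by
    rintro ⟨i, p⟩
    by_cases h : (i : ℕ) < l
    · simp [splitIdx, h]
    · simp [splitIdx, h, Fin.ext_iff]
      omega
  right_inv := by
    rintro (⟨i, p⟩ | p) <;> simp [splitIdx]

@[simp] lemma finSuccProdEquiv_symm_inl (l : ℕ) (ι : Type*) (i : Fin l) (p : ι) :
    (finSuccProdEquiv l ι).symm (.inl (i, p)) = (i.castSucc, p) := rfl

@[simp] lemma finSuccProdEquiv_symm_inr (l : ℕ) (ι : Type*) (p : ι) :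
    (finSuccProdEquiv l ι).symm (.inr p) = (Fin.last l, p) := rfl

section

variable (A : ℕ → Matrix (Fin n) (Fin n) ℝ) (B : ℕ → Matrix (Fin n) (Fin m) ℝ)
  (G : ℕ → Matrix (Fin r) (Fin n) ℝ) (D : ℕ → Matrix (Fin r) (Fin m) ℝ) (t l : ℕ)

lemma Fx_succ :
    (Fx A t (l + 1)).submatrix (finSuccProdEquiv l _).symm (finSuccProdEquiv l _).symm =
      fromBlocks (Fx A t l) (-Vm A t l) 0 1 := by
  -- Rewrite the indices before unfolding `Fx`, so that the `Decidable` instances of its `if`s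
  -- are rewritten along with the conditions.
  ext (⟨i, p⟩ | p) (⟨j, q⟩ | q) <;>
    dsimp only [submatrix_apply, finSuccProdEquiv_symm_inl, finSuccProdEquiv_symm_inr]
  · simp [Fx]
  · simp [Fx, Vm, Fin.castSucc_ne_last i]
    have hi := i.isLt
    by_cases h : l = i + 1
    · rw [if_pos h, if_pos (by omega), show t + l - 1 = t + i by omega]
    · rw [if_neg h, if_neg (by omega), neg_zero]
  · have hj : (j : ℕ) ≠ l + 1 := by omega
    simp [Fx, (Fin.castSucc_ne_last j).symm, hj]
  · simp [Fx, one_apply]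

lemma det_Fx : (Fx A t l).det = 1 := by
  induction l with
  | zero => exact det_isEmpty
  | succ l ih =>
    rw [← det_submatrix_equiv_self (finSuccProdEquiv l _).symm, Fx_succ,
      det_fromBlocks_zero₂₁, ih, det_one, one_mul]

lemma inv_Fx_succ :
    (Fx A t (l + 1))⁻¹.submatrix (finSuccProdEquiv l _).symm (finSuccProdEquiv l _).symm =
      fromBlocks (Fx A t l)⁻¹ ((Fx A t l)⁻¹ * Vm A t l) 0 1 := by
  rw [← inv_submatrix_equiv, Fx_succ, inv_fromBlocks_zero₂₁_of_isUnit_iff]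
  · simp
  · simp [isUnit_iff_isUnit_det, det_Fx]

lemma Fu_succ :
    (Fu B t (l + 1)).submatrix (finSuccProdEquiv l _).symm (finSuccProdEquiv l _).symm =
      fromBlocks (Fu B t l) 0 0 (B (t + l))ᵀ := by
  ext (⟨i, p⟩ | p) (⟨j, q⟩ | q)
  · simp [Fu]
  · simp [Fu, Fin.castSucc_ne_last i]
  · simp [Fu, (Fin.castSucc_ne_last j).symm]
  · simp [Fu]

lemma Phix_succ :
    (Phix G t (l + 1)).submatrix (finSuccProdEquiv l _).symm id =
      fromRows (Phix G t l) (G (t + l))ᵀ := by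
  ext (⟨i, p⟩ | p) q <;> simp [Phix]

lemma Phiu_succ :
    (Phiu D t (l + 1)).submatrix (finSuccProdEquiv l _).symm id =
      fromRows (Phiu D t l) (D (t + l))ᵀ := by
  ext (⟨i, p⟩ | p) q <;> simp [Phiu]

lemma Vm_succ :
    (Vm A t (l + 1)).submatrix (finSuccProdEquiv l _).symm id = fromRows 0 (A (t + l))ᵀ := by
  ext (⟨i, p⟩ | p) q
  · simp [Vm, i.isLt.ne]
  · simp [Vm, Nat.add_sub_assoc]

lemma Hm_eq :
    Hm A B G D t l =
      Fu B t l * (Fx A t l)⁻¹ * fromCols (Phix G t l) (Vm A t l) + fromCols (Phiu D t l) 0 := by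
  ext i (j | j) <;> simp [Hm, H1m, H2m]

lemma Hm_succ_submatrix_castSucc :
    (Hm A B G D t (l + 1)).submatrix (fun ip => (ip.1.castSucc, ip.2)) id =
      Hm A B G D t l * (fromBlocks 1 0 (G (t + l))ᵀ (A (t + l))ᵀ :
        Matrix (Fin r ⊕ Fin n) (Fin r ⊕ Fin n) ℝ) := by
  change ((Hm A B G D t (l + 1)).submatrix (finSuccProdEquiv l _).symm id).toRows₁ = _
  rw [Hm_eq A B G D t (l + 1), submatrix_add, Pi.add_apply, Pi.add_apply,
    ← submatrix_mul_equiv _ _ _ (finSuccProdEquiv l (Fin n)).symm,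
    ← submatrix_mul_equiv _ _ _ (finSuccProdEquiv l (Fin n)).symm, Fu_succ, inv_Fx_succ,
    submatrix_id_fromCols, submatrix_id_fromCols, Phix_succ, Vm_succ, Phiu_succ,
    fromBlocks_multiply, Hm, fromCols_mul_fromBlocks]
  ext i (j | j)
  · simp [H1m, H2m, fromBlocks_multiply, Matrix.mul_assoc]
    ring
  · simp [H1m, H2m, fromBlocks_multiply, Matrix.mul_assoc]

end

theorem recovery_matrix_rank_nondecreasing_general (n m r : ℕ)
    (A : ℕ → Matrix (Fin n) (Fin n) ℝ) (B : ℕ → Matrix (Fin n) (Fin m) ℝ)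
    (G : ℕ → Matrix (Fin r) (Fin n) ℝ) (D : ℕ → Matrix (Fin r) (Fin m) ℝ)
    (t l : ℕ)
    (hdet : (A (t + l)).det ≠ 0) :
    (Hm A B G D t l).rank ≤ (Hm A B G D t (l + 1)).rank := by
  have hM : IsUnit (fromBlocks 1 0 (G (t + l))ᵀ (A (t + l))ᵀ :
      Matrix (Fin r ⊕ Fin n) (Fin r ⊕ Fin n) ℝ).det := by
    simpa [det_fromBlocks_zero₁₂] using hdet
  calc (Hm A B G D t l).rank
      = ((Hm A B G D t (l + 1)).submatrix
          (fun ip : Fin l × Fin m => (ip.1.castSucc, ip.2)) id).rank := by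
        rw [Hm_succ_submatrix_castSucc, rank_mul_eq_left_of_isUnit_det _ _ hM]
    _ ≤ (Hm A B G D t (l + 1)).rank := rank_submatrix_le _ _ _

/-- Lemma 2 (rank nondecreasing): if `det A_{t+l} ≠ 0` then
`rank H(t,l) ≤ rank H(t,l+1)`. -/
theorem recovery_matrix_rank_nondecreasing (n m r T : ℕ) (hn : 0 < n) (hm : 0 < m) (hr : 0 < r) (hT : 1 ≤ T)
    (A : ℕ → Matrix (Fin n) (Fin n) ℝ) (B : ℕ → Matrix (Fin n) (Fin m) ℝ)
    (G : ℕ → Matrix (Fin r) (Fin n) ℝ) (D : ℕ → Matrix (Fin r) (Fin m) ℝ)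
    (hAT : A T = 1)
    (t l : ℕ) (ht : 1 ≤ t) (hl : 1 ≤ l) (htl : t + l - 1 < T)
    (hdet : (A (t + l)).det ≠ 0) :
    (Hm A B G D t l).rank ≤ (Hm A B G D t (l + 1)).rank :=
  recovery_matrix_rank_nondecreasing_general n m r A B G D t l hdet

end
end

section
/- (Lemma 3, strict rank bound under non-uniqueness.) Suppose the full-horizon KKT conditions hold for ω ∈ ℝ^r with costates λ ∈ (ℝ^n)^T, and also hold for ω̃ ∈ ℝ^r with costates λ̃ ∈ (ℝ^n)^T, where ω and ω̃ are linearly independent in ℝ^r. Then for every window 1 ≤ t ≤ t+l−1 ≤ T, rank H(t,l) < r+n−1. -/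
open Matrix

noncomputable section

variable {n m r : ℕ}

/-!
Restricted to a window `t, …, t+l-1`, the KKT conditions say that the window costates solve
`F_x λ = Φ_x ω + V λ_{t+l}` (with `λ_{T+1} = 0`) and `F_u λ + Φ_u ω = 0`. Since `F_x` is
unipotent block upper triangular, eliminating `λ` gives `H(t,l) (ω, λ_{t+l}) = 0`. The two
KKT solutions therefore yield two kernel vectors of `H(t,l)`, linearly independent because their
`ω`-parts are, so `rank H(t,l) ≤ r + n - 2`.
-/

theorem Matrix.rank_add_card_le_of_mulVec_eq_zero {K m n ι : Type*} [Field K] [Fintype n]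
    [Fintype ι] (M : Matrix m n K) {v : ι → n → K} (hv : LinearIndependent K v)
    (hMv : ∀ i, M *ᵥ v i = 0) :
    M.rank + Fintype.card ι ≤ Fintype.card n := by
  have hspan : Submodule.span K (Set.range v) ≤ LinearMap.ker M.mulVecLin :=
    Submodule.span_le.2 <| Set.range_subset_iff.2 hMv
  have hker := Submodule.finrank_mono hspan
  rw [finrank_span_eq_card hv] at hker
  have := LinearMap.finrank_range_add_finrank_ker M.mulVecLin
  rw [Module.finrank_fintype_fun_eq_card] at this
  change Module.finrank K (LinearMap.range M.mulVecLin) + _ ≤ _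
  omega

theorem LinearIndependent.sumElim_left {K ι α β : Type*} [Ring K] {v : ι → α → K}
    (hv : LinearIndependent K v) (w : ι → β → K) :
    LinearIndependent K fun i => Sum.elim (v i) (w i) :=
  LinearIndependent.of_comp (LinearMap.funLeft K K Sum.inl) hv

theorem Fx_eq_one_sub (A : ℕ → Matrix (Fin n) (Fin n) ℝ) (t l : ℕ) :
    Fx A t l = 1 - of fun ip jq : Fin l × Fin n =>
      if (jq.1 : ℕ) = ip.1 + 1 then (A (t + ip.1))ᵀ ip.2 jq.2 else 0 := by
  ext ⟨i, p⟩ ⟨j, q⟩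
  rcases eq_or_ne i j with rfl | hij
  · simp [Fx, one_apply]
  · by_cases hj : (j : ℕ) = i + 1 <;> simp [Fx, one_apply, hij, hj]

theorem Fx_mulVec_stackVec (A : ℕ → Matrix (Fin n) (Fin n) ℝ) (lam : ℕ → Fin n → ℝ)
    (t l : ℕ) (i : Fin l) (p : Fin n) :
    (Fx A t l *ᵥ stackVec lam t l) (i, p) =
      lam (t + i) p - if (i : ℕ) + 1 < l then ((A (t + i))ᵀ *ᵥ lam (t + i + 1)) p else 0 := by
  rw [Fx_eq_one_sub, sub_mulVec, one_mulVec, Pi.sub_apply]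
  congr 1
  simp only [mulVec, dotProduct, Fintype.sum_prod_type, of_apply, ite_mul, zero_mul]
  split_ifs with hi
  · rw [Finset.sum_eq_single ⟨i + 1, hi⟩ (fun j _ hj => by simp [Fin.ext_iff.not.mp hj])
      (by simp)]
    simp [stackVec, add_assoc]
  · refine Finset.sum_eq_zero fun j _ => ?_
    simp [show (j : ℕ) ≠ i + 1 by omega]

theorem Fx_det (A : ℕ → Matrix (Fin n) (Fin n) ℝ) (t l : ℕ) : (Fx A t l).det = 1 := by
  have htri : (Fx A t l).BlockTriangular Prod.fst := by
    rintro ⟨i, p⟩ ⟨j, q⟩ (hji : j < i)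
    simp [Fx, hji.ne', show (j : ℕ) ≠ i + 1 by omega]
  rw [htri.det]
  refine Finset.prod_eq_one fun a _ => ?_
  have hblock : (Fx A t l).toSquareBlock Prod.fst a = 1 := by
    ext ⟨⟨i, p⟩, rfl⟩ ⟨⟨j, q⟩, hj : j = i⟩
    subst hj
    simp [toSquareBlock_def, Fx, one_apply]
  rw [hblock, det_one]

theorem Fu_mulVec_stackVec (B : ℕ → Matrix (Fin n) (Fin m) ℝ) (lam : ℕ → Fin n → ℝ)
    (t l : ℕ) (i : Fin l) (p : Fin m) :
    (Fu B t l *ᵥ stackVec lam t l) (i, p) = ((B (t + i))ᵀ *ᵥ lam (t + i)) p := by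
  simp only [mulVec, dotProduct, Fintype.sum_prod_type, Fu, ite_mul, zero_mul]
  rw [Finset.sum_eq_single i (fun j _ hj => by simp [Ne.symm hj]) (by simp)]
  simp [stackVec]

theorem Vm_mulVec_apply (A : ℕ → Matrix (Fin n) (Fin n) ℝ) (t l : ℕ) (y : Fin n → ℝ)
    (i : Fin l) (p : Fin n) :
    (Vm A t l *ᵥ y) (i, p) = if (i : ℕ) = l - 1 then ((A (t + l - 1))ᵀ *ᵥ y) p else 0 := by
  split_ifs with hi <;> simp [Vm, mulVec, dotProduct, hi]

theorem Phix_mulVec_apply (G : ℕ → Matrix (Fin r) (Fin n) ℝ) (t l : ℕ) (ω : Fin r → ℝ)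
    (i : Fin l) (p : Fin n) :
    (Phix G t l *ᵥ ω) (i, p) = ((G (t + i))ᵀ *ᵥ ω) p := rfl

theorem Phiu_mulVec_apply (D : ℕ → Matrix (Fin r) (Fin m) ℝ) (t l : ℕ) (ω : Fin r → ℝ)
    (i : Fin l) (p : Fin m) :
    (Phiu D t l *ᵥ ω) (i, p) = ((D (t + i))ᵀ *ᵥ ω) p := rfl

theorem Hm_mulVec_sumElim_eq_zero {A : ℕ → Matrix (Fin n) (Fin n) ℝ}
    {B : ℕ → Matrix (Fin n) (Fin m) ℝ} {G : ℕ → Matrix (Fin r) (Fin n) ℝ}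
    {D : ℕ → Matrix (Fin r) (Fin m) ℝ} {t l : ℕ} {x : Fin l × Fin n → ℝ} {ω : Fin r → ℝ}
    {y : Fin n → ℝ} (hx : Fx A t l *ᵥ x = Phix G t l *ᵥ ω + Vm A t l *ᵥ y)
    (hu : Fu B t l *ᵥ x + Phiu D t l *ᵥ ω = 0) :
    Hm A B G D t l *ᵥ Sum.elim ω y = 0 := by
  have hsolve : (Fx A t l)⁻¹ *ᵥ (Phix G t l *ᵥ ω + Vm A t l *ᵥ y) = x := by
    rw [← hx, mulVec_mulVec, nonsing_inv_mul _ (by simp [Fx_det]), one_mulVec]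
  rw [Hm, fromCols_mulVec_sumElim, H1m, H2m, add_mulVec, ← mulVec_mulVec, ← mulVec_mulVec,
    ← mulVec_mulVec, ← mulVec_mulVec, add_right_comm, ← mulVec_add, ← mulVec_add, hsolve, hu]

def extendCostate (T : ℕ) (lam : ℕ → Fin n → ℝ) (k : ℕ) : Fin n → ℝ :=
  if k ≤ T then lam k else 0

section KKT

variable {T : ℕ} {A : ℕ → Matrix (Fin n) (Fin n) ℝ} {B : ℕ → Matrix (Fin n) (Fin m) ℝ}
  {G : ℕ → Matrix (Fin r) (Fin n) ℝ} {D : ℕ → Matrix (Fin r) (Fin m) ℝ} {ω : Fin r → ℝ}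
  {lam : ℕ → Fin n → ℝ}

theorem KKT.costate_eq (h : KKT A B G D T ω lam) {k : ℕ} (hk1 : 1 ≤ k) (hk2 : k ≤ T) :
    lam k = (A k)ᵀ *ᵥ extendCostate T lam (k + 1) + (G k)ᵀ *ᵥ ω := by
  funext p
  have hrow := congrFun h.1 (⟨k - 1, by omega⟩, p)
  have hk : 1 + (k - 1) = k := by omega
  simp only [Pi.add_apply, Pi.neg_apply, Pi.zero_apply, Fx_mulVec_stackVec, Phix_mulVec_apply,
    hk] at hrow
  rw [Pi.add_apply, extendCostate]
  by_cases hkT : k < T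
  · rw [if_pos (by omega)] at hrow
    rw [if_pos (by omega)]
    linarith
  · rw [if_neg (by omega)] at hrow
    rw [if_neg (by omega), mulVec_zero, Pi.zero_apply]
    linarith

theorem KKT.stationarity (h : KKT A B G D T ω lam) {k : ℕ} (hk1 : 1 ≤ k) (hk2 : k ≤ T) :
    (B k)ᵀ *ᵥ lam k + (D k)ᵀ *ᵥ ω = 0 := by
  funext p
  have hrow := congrFun h.2 (⟨k - 1, by omega⟩, p)
  have hk : 1 + (k - 1) = k := by omega
  simpa only [Pi.add_apply, Pi.zero_apply, Fu_mulVec_stackVec, Phiu_mulVec_apply, hk]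
    using hrow

theorem KKT.Fx_mulVec_window (h : KKT A B G D T ω lam) {t l : ℕ} (ht : 1 ≤ t)
    (htl : t + l - 1 ≤ T) :
    Fx A t l *ᵥ stackVec lam t l =
      Phix G t l *ᵥ ω + Vm A t l *ᵥ extendCostate T lam (t + l) := by
  funext ⟨i, p⟩
  rw [Fx_mulVec_stackVec, Pi.add_apply, Phix_mulVec_apply, Vm_mulVec_apply,
    h.costate_eq (by omega) (by omega)]
  by_cases hi : (i : ℕ) + 1 < l
  · rw [if_pos hi, if_neg (by omega), extendCostate, if_pos (by omega), Pi.add_apply]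
    ring
  · have hlast : t + i = t + l - 1 := by omega
    rw [if_neg hi, if_pos (by omega), hlast, show t + l - 1 + 1 = t + l by omega,
      Pi.add_apply]
    ring

theorem KKT.Fu_mulVec_window (h : KKT A B G D T ω lam) {t l : ℕ} (ht : 1 ≤ t)
    (htl : t + l - 1 ≤ T) :
    Fu B t l *ᵥ stackVec lam t l + Phiu D t l *ᵥ ω = 0 := by
  funext ⟨i, p⟩
  rw [Pi.add_apply, Fu_mulVec_stackVec, Phiu_mulVec_apply]
  exact congrFun (h.stationarity (by omega) (by omega)) p

theorem KKT.Hm_mulVec_eq_zero (h : KKT A B G D T ω lam) {t l : ℕ} (ht : 1 ≤ t)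
    (htl : t + l - 1 ≤ T) :
    Hm A B G D t l *ᵥ Sum.elim ω (extendCostate T lam (t + l)) = 0 :=
  Hm_mulVec_sumElim_eq_zero (h.Fx_mulVec_window ht htl) (h.Fu_mulVec_window ht htl)

end KKT

theorem recovery_matrix_rank_strict_bound_general (n m r T : ℕ)
    (A : ℕ → Matrix (Fin n) (Fin n) ℝ) (B : ℕ → Matrix (Fin n) (Fin m) ℝ)
    (G : ℕ → Matrix (Fin r) (Fin n) ℝ) (D : ℕ → Matrix (Fin r) (Fin m) ℝ)
    (ω ωt : Fin r → ℝ)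
    (lam lamt : ℕ → Fin n → ℝ)
    (hKKT : KKT A B G D T ω lam) (hKKTt : KKT A B G D T ωt lamt)
    (hind : LinearIndependent ℝ ![ω, ωt])
    (t l : ℕ) (ht : 1 ≤ t) (htl : t + l - 1 ≤ T) :
    (Hm A B G D t l).rank < r + n - 1 := by
  have hker : ∀ i, Hm A B G D t l *ᵥ Sum.elim (![ω, ωt] i)
      (![extendCostate T lam (t + l), extendCostate T lamt (t + l)] i) = 0 :=
    Fin.forall_fin_two.2 ⟨hKKT.Hm_mulVec_eq_zero ht htl, hKKTt.Hm_mulVec_eq_zero ht htl⟩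
  have hrank := (Hm A B G D t l).rank_add_card_le_of_mulVec_eq_zero (hind.sumElim_left _) hker
  simp only [Fintype.card_fin, Fintype.card_sum] at hrank
  omega

/-- Lemma 3 (strict rank bound under non-uniqueness): if the full-horizon KKT conditions
hold for two linearly independent weight vectors, then `rank H(t,l) < r+n−1`. -/
theorem recovery_matrix_rank_strict_bound (n m r T : ℕ) (hn : 0 < n) (hm : 0 < m) (hr : 0 < r) (hT : 1 ≤ T)
    (A : ℕ → Matrix (Fin n) (Fin n) ℝ) (B : ℕ → Matrix (Fin n) (Fin m) ℝ)
    (G : ℕ → Matrix (Fin r) (Fin n) ℝ) (D : ℕ → Matrix (Fin r) (Fin m) ℝ)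
    (hAT : A T = 1)
    (ω ωt : Fin r → ℝ)
    (lam lamt : ℕ → Fin n → ℝ)
    (hKKT : KKT A B G D T ω lam) (hKKTt : KKT A B G D T ωt lamt)
    (hind : LinearIndependent ℝ ![ω, ωt])
    (t l : ℕ) (ht : 1 ≤ t) (hl : 1 ≤ l) (htl : t + l - 1 ≤ T) :
    (Hm A B G D t l).rank < r + n - 1 :=
  recovery_matrix_rank_strict_bound_general n m r T A B G D ω ωt lam lamt hKKT hKKTt hind t l ht htl

end
end
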